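/- Let G and H be locally compact second countable Hausdorff topological groups with left Haar measures μ and ν respectively, and let θ : G → H be a continuous homomorphism whose image θ(G) is an open subgroup of H. Let λ be a left Haar measure on ker θ. Then there exists a real constant c with 0 < c < ∞ such that for every Borel set E ⊆ H one has μ(θ⁻¹(E)) = c · λ(ker θ) · ν(E ∩ θ(G)); in particular μ(θ⁻¹(E)) ≤ c · λ(ker θ) · ν(E) for every Borel set E ⊆ H. -/

import Mathlib

/-!
Push `μ` forward along `θ` to the open subgroup `θ(G)`, on which `ν` restricts to a Haar measure;
the pushforward is left-invariant. If `ker θ` is compact, the pushforward is finite on compact sets,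
so by uniqueness it is a finite positive multiple of the Haar measure, while `λ(ker θ)` is finite
and positive. If `ker θ` is not compact, then `λ(ker θ) = ∞`; Fubini on `θ(G) × G` shows that
`θ⁻¹(A)` is `μ`-null exactly when `A` is `ν`-null, and `θ⁻¹(A)`, being invariant under the
noncompact kernel, has measure `0` or `∞`.
-/

open MeasureTheory Measure Set Function Topology
open scoped Pointwise ENNReal

section Measurable

variable {G H : Type*} [Group G] [MeasurableSpace G] [MeasurableMul G]
  [Group H] [MeasurableSpace H] [MeasurableMul₂ H] [MeasurableInv H]
  (μ : Measure G) (ν : Measure H) [SFinite μ] [SFinite ν]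
  [μ.IsMulLeftInvariant] [ν.IsMulLeftInvariant]

/-- Fubini on `{(h, x) | h⁻¹ * φ x ∈ A}`: its slices over `H` are translates of `φ ⁻¹' A`, and
its slices over `G` are translates of `A⁻¹`. -/
theorem measure_preimage_mul_measure_univ {φ : G →* H} (hφ : Measurable φ)
    (hsurj : Surjective φ) {A : Set H} (hA : MeasurableSet A) :
    μ (φ ⁻¹' A) * ν univ = ν A⁻¹ * μ univ := by
  set T : Set (H × G) := {p | p.1⁻¹ * φ p.2 ∈ A}
  have hT : MeasurableSet T := (measurable_fst.inv.mul (hφ.comp measurable_snd)) hA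
  have slice_fst : ∀ h, μ (Prod.mk h ⁻¹' T) = μ (φ ⁻¹' A) := by
    intro h
    obtain ⟨g, rfl⟩ := hsurj h
    have : Prod.mk (φ g) ⁻¹' T = (g⁻¹ * ·) ⁻¹' (φ ⁻¹' A) := by ext x; simp [T]
    rw [this, measure_preimage_mul]
  have slice_snd : ∀ x, ν ((·, x) ⁻¹' T) = ν A⁻¹ := by
    intro x
    have : (·, x) ⁻¹' T = ((φ x)⁻¹ * ·) ⁻¹' A⁻¹ := by ext h; simp [T]
    rw [this, measure_preimage_mul]
  calc μ (φ ⁻¹' A) * ν univ = (ν.prod μ) T := by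
        rw [Measure.prod_apply hT, lintegral_congr slice_fst, lintegral_const]
    _ = ν A⁻¹ * μ univ := by
        rw [Measure.prod_apply_symm hT, lintegral_congr slice_snd, lintegral_const]

theorem measure_preimage_eq_zero_iff_of_surjective [NeZero μ] [NeZero ν] {φ : G →* H}
    (hφ : Measurable φ) (hsurj : Surjective φ) {A : Set H} (hA : MeasurableSet A) :
    μ (φ ⁻¹' A) = 0 ↔ ν A = 0 := by
  have h := measure_preimage_mul_measure_univ μ ν hφ hsurj hA
  have hμ : μ univ ≠ 0 := measure_univ_ne_zero.2 (NeZero.ne μ)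
  have hν : ν univ ≠ 0 := measure_univ_ne_zero.2 (NeZero.ne ν)
  rw [← measure_inv_null ν]
  constructor <;> intro h0
  · simpa [h0, hμ] using h.symm
  · simpa [h0, hν] using h

end Measurable

section Topological

variable {G : Type*} [Group G] [TopologicalSpace G] [IsTopologicalGroup G]

theorem Subgroup.exists_mem_disjoint_smul_of_not_isCompact (K : Subgroup G)
    (hKc : IsClosed (K : Set G)) (hK : ¬IsCompact (K : Set G)) {L D : Set G}
    (hL : IsCompact L) (hD : IsCompact D) : ∃ k ∈ K, Disjoint L (k • D) := by
  obtain ⟨k, hkK, hk⟩ : ∃ k ∈ K, k ∉ L * D⁻¹ := by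
    by_contra! h
    exact hK ((hL.mul hD.inv).of_isClosed_subset hKc h)
  refine ⟨k, hkK, disjoint_left.2 fun a ha ⟨b, hb, hba⟩ => hk ⟨a, ha, b⁻¹, by simpa using hb, ?_⟩⟩
  simp [← hba]

variable [T2Space G] [MeasurableSpace G] [BorelSpace G]

/-- Invariance under a noncompact subgroup leaves room for arbitrarily many disjoint translates
of a compact set of positive measure. -/
theorem measure_eq_zero_or_top_of_smul_subset (μ : Measure G) [μ.IsMulLeftInvariant]
    [μ.InnerRegularCompactLTTop] (K : Subgroup G) (hKc : IsClosed (K : Set G))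
    (hK : ¬IsCompact (K : Set G)) {B : Set G} (hB : MeasurableSet B)
    (hKB : ∀ k ∈ K, k • B ⊆ B) : μ B = 0 ∨ μ B = ∞ := by
  by_contra! h
  obtain ⟨D, hDB, hD, hDpos⟩ := hB.exists_lt_isCompact_of_ne_top h.2 (pos_iff_ne_zero.2 h.1)
  have unbounded : ∀ n : ℕ, ∃ L ⊆ B, IsCompact L ∧ n * μ D ≤ μ L := by
    intro n
    induction n with
    | zero => exact ⟨∅, empty_subset _, isCompact_empty, by simp⟩
    | succ n ih =>
      obtain ⟨L, hLB, hL, hLμ⟩ := ih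
      obtain ⟨k, hk, hdisj⟩ := K.exists_mem_disjoint_smul_of_not_isCompact hKc hK hL hD
      refine ⟨L ∪ k • D, union_subset hLB ((smul_set_mono hDB).trans (hKB k hk)),
        hL.union (hD.smul k), ?_⟩
      rw [measure_union hdisj (hD.smul k).measurableSet, measure_smul, Nat.cast_succ, add_one_mul]
      gcongr
  obtain ⟨n, hn⟩ := ENNReal.exists_nat_mul_gt hDpos.ne' h.2
  obtain ⟨L, hLB, -, hL⟩ := unbounded n
  exact (hn.trans_le (hL.trans (measure_mono hLB))).false

end Topological

theorem MonoidHom.preimage_image_eq_mul_ker {G H : Type*} [Group G] [Group H] (φ : G →* H)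
    (s : Set G) : φ ⁻¹' (φ '' s) = s * φ.ker := by
  ext x
  constructor
  · rintro ⟨y, hy, hyx⟩
    exact ⟨y, hy, y⁻¹ * x, by simp [hyx], mul_inv_cancel_left y x⟩
  · rintro ⟨y, hy, k, hk, rfl⟩
    exact ⟨y, hy, by simp [(MonoidHom.mem_ker).1 hk]⟩

section Haar

variable {G H : Type*}
  [Group G] [TopologicalSpace G] [IsTopologicalGroup G] [LocallyCompactSpace G]
  [SecondCountableTopology G] [MeasurableSpace G] [BorelSpace G]
  [Group H] [TopologicalSpace H] [IsTopologicalGroup H] [LocallyCompactSpace H]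
  [T2Space H] [MeasurableSpace H] [BorelSpace H]
  (μ : Measure G) [μ.IsHaarMeasure] {φ : G →* H}

/-- For a compact identity neighbourhood `V`, the set `φ '' V` has nonempty interior (`φ` is open)
and `map φ μ`-mass `μ (V * ker φ)`, which is finite and positive. -/
theorem isHaarMeasure_map_of_isCompact_ker (hφ : Continuous φ) (hsurj : Surjective φ)
    (hker : IsCompact (φ.ker : Set G)) : (map φ μ).IsHaarMeasure := by
  have : (map φ μ).IsMulLeftInvariant :=
    isMulLeftInvariant_map φ.toMulHom hφ.measurable hsurj
  obtain ⟨V, hV, hV1⟩ := exists_compact_mem_nhds (1 : G)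
  have hφV : IsCompact (φ '' V) := hV.image hφ
  have hmap : map φ μ (φ '' V) = μ (V * φ.ker) := by
    rw [map_apply hφ.measurable hφV.measurableSet, φ.preimage_image_eq_mul_ker]
  have hφV1 : φ '' V ∈ 𝓝 1 :=
    map_one φ ▸ (φ.isOpenMap_of_sigmaCompact hsurj hφ).image_mem_nhds hV1
  refine isHaarMeasure_of_isCompact_nonempty_interior _ (φ '' V) hφV
    ⟨1, mem_interior_iff_mem_nhds.2 hφV1⟩ ?_ ?_
  · rw [hmap]
    exact (measure_pos_of_mem_nhds μ
      (Filter.mem_of_superset hV1 (subset_mul_left _ φ.ker.one_mem))).ne'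
  · rw [hmap]
    exact (hV.mul hker).measure_lt_top.ne

variable [T2Space G] [SecondCountableTopology H] (ν : Measure H) [ν.IsHaarMeasure]

theorem map_eq_top_smul_of_not_isCompact_ker (hφ : Continuous φ) (hsurj : Surjective φ)
    (hker : ¬IsCompact (φ.ker : Set G)) : map φ μ = ∞ • ν := by
  ext A hA
  rw [map_apply hφ.measurable hA, Measure.smul_apply, smul_eq_mul]
  have hkerB : ∀ k ∈ φ.ker, k • (φ ⁻¹' A) ⊆ φ ⁻¹' A := by
    rintro k hk _ ⟨x, hx, rfl⟩
    simpa [(MonoidHom.mem_ker).1 hk] using hx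
  have hnull := measure_preimage_eq_zero_iff_of_surjective μ ν hφ.measurable hsurj hA
  rcases measure_eq_zero_or_top_of_smul_subset μ φ.ker
      (φ.coe_ker ▸ isClosed_singleton.preimage hφ) hker (hφ.measurable hA) hkerB with h | h
  · rw [h, hnull.1 h, mul_zero]
  · rw [h, ENNReal.top_mul (mt hnull.2 (h ▸ ENNReal.top_ne_zero))]

/-- Stated for any `K` equal to `ker φ`, so that it applies to `θ.rangeRestrict`, whose kernel
is only propositionally equal to `ker θ`. -/
theorem exists_map_eq_mul_measure_univ_smul (hφ : Continuous φ) (hsurj : Surjective φ)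
    (K : Subgroup G) (hK : φ.ker = K) (lam : Measure K) [lam.IsHaarMeasure] :
    ∃ c : ℝ≥0∞, 0 < c ∧ c < ∞ ∧ map φ μ = (c * lam univ) • ν := by
  subst hK
  by_cases hker : IsCompact (φ.ker : Set G)
  · have : CompactSpace φ.ker := isCompact_iff_compactSpace.1 hker
    have : (map φ μ).IsHaarMeasure := isHaarMeasure_map_of_isCompact_ker μ hφ hsurj hker
    have hlam0 : lam univ ≠ 0 := measure_univ_ne_zero.2 (NeZero.ne lam)
    have hlamtop : lam univ ≠ ∞ := measure_ne_top lam univ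
    refine ⟨haarScalarFactor (map φ μ) ν / lam univ,
      ENNReal.div_pos (ENNReal.coe_pos.2 (haarScalarFactor_pos_of_isHaarMeasure _ _)).ne' hlamtop,
      ENNReal.div_lt_top ENNReal.coe_ne_top hlam0, ?_⟩
    rw [ENNReal.div_mul_cancel hlam0 hlamtop]
    exact isMulLeftInvariant_eq_smul (map φ μ) ν
  · have hclosed : IsClosed (φ.ker : Set G) := φ.coe_ker ▸ isClosed_singleton.preimage hφ
    have : LocallyCompactSpace φ.ker := hclosed.locallyCompactSpace
    have : NoncompactSpace φ.ker :=
      not_compactSpace_iff.1 fun h => hker (isCompact_iff_compactSpace.2 h)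
    refine ⟨1, one_pos, ENNReal.one_lt_top, ?_⟩
    rw [one_mul, measure_univ_of_isMulLeftInvariant,
      map_eq_top_smul_of_not_isCompact_ker μ ν hφ hsurj hker]

end Haar

theorem haar_preimage_of_open_range_general {G H : Type*}
    [Group G] [TopologicalSpace G] [IsTopologicalGroup G] [LocallyCompactSpace G]
    [SecondCountableTopology G] [T2Space G] [MeasurableSpace G] [BorelSpace G]
    [Group H] [TopologicalSpace H] [IsTopologicalGroup H] [LocallyCompactSpace H]
    [SecondCountableTopology H] [T2Space H] [MeasurableSpace H] [BorelSpace H]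
    (μ : Measure G) (ν : Measure H) [μ.IsHaarMeasure]
    [ν.IsHaarMeasure]
    (θ : G →* H) (hθ : Continuous θ) (hopen : IsOpen (Set.range θ))
    (lam : Measure θ.ker) [lam.IsHaarMeasure] :
    ∃ c : ENNReal, 0 < c ∧ c < ⊤ ∧
      (∀ E : Set H, MeasurableSet E →
        μ (⇑θ ⁻¹' E) = c * lam Set.univ * ν (E ∩ Set.range θ)) ∧
      (∀ E : Set H, MeasurableSet E →
        μ (⇑θ ⁻¹' E) ≤ c * lam Set.univ * ν E) := by
  have hS : IsOpen (θ.range : Set H) := by rwa [MonoidHom.coe_range]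
  have : LocallyCompactSpace θ.range := hS.locallyCompactSpace
  have : SecondCountableTopology θ.range := TopologicalSpace.Subtype.secondCountableTopology _
  have hemb : IsOpenEmbedding θ.range.subtype := hS.isOpenEmbedding_subtypeVal
  have : (ν.comap θ.range.subtype).IsHaarMeasure :=
    IsHaarMeasure.comap (mH := inferInstance) ν hemb
  have hφ : Continuous θ.rangeRestrict := hθ.subtype_mk _
  obtain ⟨c, hc0, hctop, hc⟩ := exists_map_eq_mul_measure_univ_smul μ (ν.comap θ.range.subtype)
    hφ θ.rangeRestrict_surjective _ θ.ker_rangeRestrict lam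
  have key : ∀ E, MeasurableSet E → μ (θ ⁻¹' E) = c * lam univ * ν (E ∩ range θ) := by
    intro E hE
    have hpre : θ ⁻¹' E = θ.rangeRestrict ⁻¹' (θ.range.subtype ⁻¹' E) := rfl
    rw [hpre, ← map_apply hφ.measurable (hemb.continuous.measurable hE), hc, Measure.smul_apply,
      smul_eq_mul, hemb.measurableEmbedding.comap_preimage, θ.range.coe_subtype,
      Subtype.range_coe, MonoidHom.coe_range]
  exact ⟨c, hc0, hctop, key, fun E hE => (key E hE).trans_le (by gcongr; exact inter_subset_left)⟩

/-- If `θ : G → H` is a continuous homomorphism with open image, `μ`, `ν` Haar measures on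
`G`, `H` and `lam` a Haar measure on `ker θ`, then there is a finite positive constant `c`
such that `μ(θ⁻¹(E)) = c · lam(ker θ) · ν(E ∩ θ(G))`, and in particular
`μ(θ⁻¹(E)) ≤ c · lam(ker θ) · ν(E)`, for every Borel `E ⊆ H`. -/
theorem haar_preimage_of_open_range {G H : Type*}
    [Group G] [TopologicalSpace G] [IsTopologicalGroup G] [LocallyCompactSpace G]
    [SecondCountableTopology G] [T2Space G] [MeasurableSpace G] [BorelSpace G]
    [Group H] [TopologicalSpace H] [IsTopologicalGroup H] [LocallyCompactSpace H]
    [SecondCountableTopology H] [T2Space H] [MeasurableSpace H] [BorelSpace H]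
    (μ : Measure G) (ν : Measure H) [μ.IsHaarMeasure] [μ.Regular]
    [ν.IsHaarMeasure] [ν.Regular]
    (θ : G →* H) (hθ : Continuous θ) (hopen : IsOpen (Set.range θ))
    (lam : Measure θ.ker) [lam.IsHaarMeasure] [lam.Regular] :
    ∃ c : ENNReal, 0 < c ∧ c < ⊤ ∧
      (∀ E : Set H, MeasurableSet E →
        μ (⇑θ ⁻¹' E) = c * lam Set.univ * ν (E ∩ Set.range θ)) ∧
      (∀ E : Set H, MeasurableSet E →
        μ (⇑θ ⁻¹' E) ≤ c * lam Set.univ * ν E) :=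
  haar_preimage_of_open_range_general μ ν θ hθ hopen lam
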